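/- arXiv:1908.00806 — 4 statements merged into one kernel-verified Lean document; each statement's English description precedes it below -/
import Mathlib

section
/- Let γ = exp(Σ_{i=1}^N (Log x_i)^2/(2 Log q)) regarded as a multiplication operator, and let M_{a,k} be the type A difference operators M_{a,k} = Σ_{|I|=a} (Π_{i∈I} x_i)^k Π_{i∈I,j∉I} x_i/(x_i−x_j) Π_{i∈I} Γ_i. Then γ^{−1} ∘ Γ_i ∘ γ = q^{1/2} x_i Γ_i for each i, and consequently M_{a,k} = q^{−ak/2} γ^{−k} ∘ M_{a,0} ∘ γ^{k} for all a ∈ {1,...,N} and k ∈ ℤ. -/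
/-! Applying the shift `Γ_I = ∏_{i∈I} Γ_i` to the Gaussian gives `Γ_I γ = (s^{|I|} ∏_{i∈I} x_i) γ`,
so conjugating `Γ_I` by `γ^k` multiplies it by `(s^{|I|} ∏_{i∈I} x_i)^k`. Applied to each term of
`M_{a,0}`, this produces `s^{ak}` times the corresponding term of `M_{a,k}`. -/

noncomputable section

/-- The generic type `A` difference operator
`M_{a,k} = Σ_{|I|=a} (Π_{i∈I} x_i)^k Π_{i∈I,j∉I} x_i/(x_i−x_j) Π_{i∈I} Γ_i`,
acting on a field `L` of functions of `x_1,…,x_N`, where `Γ v = ∏_i Γ_i^{v_i}` denotes the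
`q`-shift operators (`Γ_i : x_i ↦ q x_i`). -/
def MAgen {L : Type*} [Field L] (N : ℕ) (x : Fin N → L) (Γ : (Fin N → ℤ) → L ≃+* L)
    (a : ℕ) (k : ℤ) : L → L := fun f =>
  ∑ I ∈ Finset.powersetCard a (Finset.univ : Finset (Fin N)),
    (∏ i ∈ I, x i) ^ k *
      ((∏ i ∈ I, ∏ j ∈ Iᶜ, x i / (x i - x j)) * Γ (fun i => if i ∈ I then 1 else 0) f)

open Finset

lemma RingEquiv.zpow_conj_apply_of_apply_eq_mul {L : Type*} [Field L] (σ : L ≃+* L) {γ c : L}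
    (hγ0 : γ ≠ 0) (h : σ γ = c * γ) (k : ℤ) (f : L) :
    γ ^ (-k) * σ (γ ^ k * f) = c ^ k * σ f := by
  rw [map_mul, map_zpow₀, h, mul_zpow, zpow_neg]
  field_simp [zpow_ne_zero k hγ0]

lemma prod_indicator_sq_mul_indicator {ι L : Type*} [Fintype ι] [DecidableEq ι] [Field L]
    (s : L) (x : ι → L) (I : Finset ι) :
    ∏ i, s ^ ((if i ∈ I then (1 : ℤ) else 0) ^ 2) * x i ^ (if i ∈ I then (1 : ℤ) else 0) =
      ∏ i ∈ I, s * x i := by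
  rw [← Fintype.prod_ite_mem I]
  refine prod_congr rfl fun i _ => ?_
  split_ifs <;> simp

lemma MAgen_eq_zpow_mul_conj {L : Type*} [Field L] {N : ℕ} (x : Fin N → L)
    (Γ : (Fin N → ℤ) → L ≃+* L) {a : ℕ} {γ c : L} (hγ0 : γ ≠ 0) (hc : c ≠ 0)
    (h : ∀ I ∈ powersetCard a univ,
      Γ (fun i => if i ∈ I then 1 else 0) γ = (c * ∏ i ∈ I, x i) * γ) (k : ℤ) :
    MAgen N x Γ a k = fun f => c ^ (-k) * (γ ^ (-k) * MAgen N x Γ a 0 (γ ^ k * f)) := by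
  funext f
  simp only [MAgen, mul_sum, zpow_zero, one_mul]
  refine sum_congr rfl fun I hI => ?_
  rw [mul_left_comm (γ ^ (-k)), RingEquiv.zpow_conj_apply_of_apply_eq_mul _ hγ0 (h I hI),
    mul_zpow, zpow_neg]
  field_simp [zpow_ne_zero k hc]

theorem stmt2_general {L : Type*} [Field L] (N : ℕ) (s : L) (hs0 : s ≠ 0)
    (x : Fin N → L) (Γ : (Fin N → ℤ) → L ≃+* L)
    (γ : L) (hγ0 : γ ≠ 0)
    (hγ : ∀ v : Fin N → ℤ, Γ v γ = (∏ i, s ^ (v i ^ 2) * x i ^ v i) * γ) :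
    (∀ (i : Fin N) (f : L),
        γ⁻¹ * Γ (fun j => if j = i then 1 else 0) (γ * f) =
          s * x i * Γ (fun j => if j = i then 1 else 0) f) ∧
    (∀ a : ℕ, 1 ≤ a → a ≤ N → ∀ k : ℤ,
      MAgen N x Γ a k = fun f =>
        s ^ (-((a : ℤ) * k)) * (γ ^ (-k) * MAgen N x Γ a 0 (γ ^ k * f))) := by
  have hΓγ (I : Finset (Fin N)) :
      Γ (fun i => if i ∈ I then 1 else 0) γ = (s ^ #I * ∏ i ∈ I, x i) * γ := by
    rw [hγ, prod_indicator_sq_mul_indicator, prod_mul_distrib, prod_const]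
  refine ⟨fun i f => ?_, fun a _ _ k => ?_⟩
  · have hδ : (fun j => if j = i then (1 : ℤ) else 0) = fun j => if j ∈ ({i} : Finset _) then 1 else 0 := by
      simp only [mem_singleton]
    rw [hδ]
    simpa using RingEquiv.zpow_conj_apply_of_apply_eq_mul _ hγ0 (hΓγ {i}) 1 f
  · rw [MAgen_eq_zpow_mul_conj x Γ hγ0 (pow_ne_zero a hs0)
      (fun I hI => by rw [hΓγ, (mem_powersetCard.mp hI).2]) k, ← zpow_natCast, ← zpow_mul, mul_neg]

/-- let `γ = exp(Σ_i (Log x_i)²/(2 Log q))` be the Gaussian, i.e. any invertible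
function satisfying `Γ v γ = (∏_i q^{v_i²/2} x_i^{v_i}) γ` (with `s = q^{1/2}`).  Then
conjugation by `γ` satisfies `γ⁻¹ ∘ Γ_i ∘ γ = q^{1/2} x_i Γ_i`, and consequently
`M_{a,k} = q^{−ak/2} γ^{−k} ∘ M_{a,0} ∘ γ^{k}` for all `a ∈ {1,…,N}` and `k ∈ ℤ`. -/
theorem stmt2 {L : Type*} [Field L] (N : ℕ) (q s : L) (hs : s ^ 2 = q) (hs0 : s ≠ 0)
    (x : Fin N → L) (Γ : (Fin N → ℤ) → L ≃+* L)
    (hΓx : ∀ (v : Fin N → ℤ) (i : Fin N), Γ v (x i) = q ^ v i * x i)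
    (γ : L) (hγ0 : γ ≠ 0)
    (hγ : ∀ v : Fin N → ℤ, Γ v γ = (∏ i, s ^ (v i ^ 2) * x i ^ v i) * γ) :
    (∀ (i : Fin N) (f : L),
        γ⁻¹ * Γ (fun j => if j = i then 1 else 0) (γ * f) =
          s * x i * Γ (fun j => if j = i then 1 else 0) f) ∧
    (∀ a : ℕ, 1 ≤ a → a ≤ N → ∀ k : ℤ,
      MAgen N x Γ a k = fun f =>
        s ^ (-((a : ℤ) * k)) * (γ ^ (-k) * MAgen N x Γ a 0 (γ ^ k * f))) :=
  stmt2_general N s hs0 x Γ γ hγ0 hγ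
end
end

section
/- For N = 2 variables, the operators M_{1,k} = x_1^k · x_1/(x_1−x_2) · Γ_1 + x_2^k · x_2/(x_2−x_1) · Γ_2 satisfy q · M_{1,k+1} M_{1,k−1} = M_{1,k}^2 − M_{2,k} M_{0,k}, where M_{2,k} = (x_1 x_2)^k Γ_1 Γ_2 and M_{0,k} = Id, for every k ∈ ℤ. -/
noncomputable section

open MvPolynomial

/-- The base field `ℚ(q^{1/2})`; `sQ` is the square root of `q`. -/
abbrev Rq : Type := RatFunc ℚ

/-- `q^{1/2}`. -/
def sQ : Rq := RatFunc.X

lemma sq_ne_zero : sQ ≠ 0 := RatFunc.X_ne_zero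

/-- The parameter `q`. -/
def qq : Rq := sQ ^ 2

/-- Polynomials in the variables `y_i = x_i^{1/2}`, `i = 1, …, N`. -/
abbrev Pol (N : ℕ) := MvPolynomial (Fin N) Rq

/-- The field of rational functions in `x_1^{1/2}, …, x_N^{1/2}` over `ℚ(q^{1/2})`. -/
abbrev K (N : ℕ) := FractionRing (Pol N)

/-- The substitution `y_j ↦ q^{v_j/2} y_j` on polynomials. -/
def shiftHom (N : ℕ) (v : Fin N → ℤ) : Pol N →ₐ[Rq] Pol N :=
  aeval fun j => C (sQ ^ v j) * X j

/-- The substitution `y_j ↦ q^{v_j/2} y_j` as an algebra automorphism of polynomials. -/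
def shiftEquiv (N : ℕ) (v : Fin N → ℤ) : Pol N ≃ₐ[Rq] Pol N :=
  AlgEquiv.ofAlgHom (shiftHom N v) (shiftHom N (-v))
    (by
      apply MvPolynomial.algHom_ext
      intro j
      simp [shiftHom]
      rw [← mul_assoc, ← C_mul, inv_mul_cancel₀ (zpow_ne_zero _ sq_ne_zero), C_1, one_mul])
    (by
      apply MvPolynomial.algHom_ext
      intro j
      simp [shiftHom]
      rw [← mul_assoc, ← C_mul, mul_inv_cancel₀ (zpow_ne_zero _ sq_ne_zero), C_1, one_mul])

/-- The `q`-shift operator `∏_i Γ_i^{v_i/2}` : the field automorphism of `K N` induced by the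
substitution `y_j = x_j^{1/2} ↦ q^{v_j / 2} y_j`, i.e. `x_j ↦ q^{v_j} x_j`.  In particular
`Γ N (2 • v)` is the honest shift `x_j ↦ q^{v_j} x_j` and half-units allow `Γ_j^{1/2}`. -/
def Γ (N : ℕ) (v : Fin N → ℤ) : K N ≃+* K N :=
  IsFractionRing.ringEquivOfRingEquiv (shiftEquiv N v).toRingEquiv

/-- The square root `y_i = x_i^{1/2}` of the `i`-th variable, inside `K N`. -/
def y (N : ℕ) (i : Fin N) : K N := algebraMap (Pol N) (K N) (X i)

/-- The `i`-th variable `x_i` of `K N`. -/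
def x (N : ℕ) (i : Fin N) : K N := y N i ^ 2

/-- The parameter `q` inside `K N`. -/
def qK (N : ℕ) : K N := algebraMap (Pol N) (K N) (C qq)

end
noncomputable section

/-- The variables of type `A_{N-1}` Macdonald theory: `x_i`, realized as the generators of `K N`. -/
def xA (N : ℕ) (i : Fin N) : K N := y N i

/-- `∏_i Γ_i^{v_i}`, where `Γ_i` is the `q`-shift operator `x_i ↦ q x_i`. -/
def ΓA (N : ℕ) (v : Fin N → ℤ) : K N ≃+* K N := Γ N (2 • v)

/-- The type `A` difference operators
`M_{a,k} = Σ_{I ⊆ [1,N], |I|=a} (Π_{i∈I} x_i)^k Π_{i∈I,j∉I} x_i/(x_i−x_j) Π_{i∈I} Γ_i`. -/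
def MA (N : ℕ) (a : ℕ) (k : ℤ) : K N → K N := fun f =>
  ∑ I ∈ Finset.powersetCard a (Finset.univ : Finset (Fin N)),
    (∏ i ∈ I, xA N i) ^ k *
      ((∏ i ∈ I, ∏ j ∈ Iᶜ, xA N i / (xA N i - xA N j)) *
        ΓA N (fun i => if i ∈ I then 1 else 0) f)

/-- `M_{1,k} = x_1^k·x_1/(x_1−x_2)·Γ_1 + x_2^k·x_2/(x_2−x_1)·Γ_2` for `N = 2`. -/
def M1 (k : ℤ) : K 2 → K 2 := fun f =>
  xA 2 0 ^ k * (xA 2 0 / (xA 2 0 - xA 2 1)) * ΓA 2 ![1, 0] f +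
    xA 2 1 ^ k * (xA 2 1 / (xA 2 1 - xA 2 0)) * ΓA 2 ![0, 1] f

/-- `M_{2,k} = (x_1 x_2)^k Γ_1 Γ_2` for `N = 2`. -/
def M2 (k : ℤ) : K 2 → K 2 := fun f => (xA 2 0 * xA 2 1) ^ k * ΓA 2 ![1, 1] f

/-!
Write `M_{1,k} = a_k Γ_1 + b_k Γ_2` with `a_k = x_1^k x_1/(x_1−x_2)` and `b_k` its mirror image.
Since `Γ_1 Γ_2 = Γ_2 Γ_1`, both sides of the Q-system relation are combinations of `Γ_1²`, `Γ_1 Γ_2`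
and `Γ_2²` with coefficients in the field, so it suffices to compare three coefficients. Only the
rules `Γ_1 x_1 = q x_1`, `Γ_1 x_2 = x_2` (and symmetrically) enter, so the comparison is done for
any two commuting endomorphisms of a field acting this way on two elements `x_1, x_2`.
-/

section DifferenceOperator

variable {F : Type*} [Field F]

def mCoeff (u v : F) (k : ℤ) : F := u ^ k * (u / (u - v))

/-- `M_{1,k}` with `Γ_1, Γ_2` replaced by arbitrary `σ₁, σ₂`. -/
def diffOp (σ₁ σ₂ : F →+* F) (x₁ x₂ : F) (k : ℤ) (f : F) : F :=
  mCoeff x₁ x₂ k * σ₁ f + mCoeff x₂ x₁ k * σ₂ f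

lemma map_mCoeff {G : Type*} [Field G] (σ : F →+* G) (u v : F) (k : ℤ) :
    σ (mCoeff u v k) = mCoeff (σ u) (σ v) k := by
  simp only [mCoeff, map_mul, map_zpow₀, map_div₀, map_sub]

lemma mCoeff_diagonal {q u : F} (v : F) (hq : q ≠ 0) (hu : u ≠ 0) (k : ℤ) :
    q * (mCoeff u v (k + 1) * mCoeff (q * u) v (k - 1)) = mCoeff u v k * mCoeff (q * u) v k := by
  have hqu : q * u ≠ 0 := mul_ne_zero hq hu
  simp only [mCoeff, zpow_add_one₀ hu, zpow_sub_one₀ hqu]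
  field_simp

-- Dividing by `(x₁ x₂)^k` leaves a rational identity in `q, x₁, x₂` that does not involve `k`.
lemma mCoeff_cross {q x₁ x₂ : F} (hx₁ : x₁ ≠ 0) (hx₂ : x₂ ≠ 0) (h₁₂ : x₁ ≠ x₂)
    (hq₁₂ : q * x₁ ≠ x₂) (hq₂₁ : q * x₂ ≠ x₁) (k : ℤ) :
    q * (mCoeff x₁ x₂ (k + 1) * mCoeff x₂ (q * x₁) (k - 1) +
        mCoeff x₂ x₁ (k + 1) * mCoeff x₁ (q * x₂) (k - 1)) =
      mCoeff x₁ x₂ k * mCoeff x₂ (q * x₁) k + mCoeff x₂ x₁ k * mCoeff x₁ (q * x₂) k -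
        (x₁ * x₂) ^ k := by
  have d₁₂ : x₁ - x₂ ≠ 0 := sub_ne_zero.mpr h₁₂
  have d₂₁ : x₂ - x₁ ≠ 0 := sub_ne_zero.mpr h₁₂.symm
  have e₁ : x₂ - q * x₁ ≠ 0 := sub_ne_zero.mpr hq₁₂.symm
  have e₂ : x₁ - q * x₂ ≠ 0 := sub_ne_zero.mpr hq₂₁.symm
  simp only [mCoeff, mul_zpow, zpow_add_one₀ hx₁, zpow_sub_one₀ hx₁, zpow_add_one₀ hx₂,
    zpow_sub_one₀ hx₂]
  field_simp
  ring

theorem diffOp_qSystem {σ₁ σ₂ : F →+* F} {q x₁ x₂ : F} (hσ : ∀ f, σ₁ (σ₂ f) = σ₂ (σ₁ f))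
    (hσ₁x₁ : σ₁ x₁ = q * x₁) (hσ₁x₂ : σ₁ x₂ = x₂) (hσ₂x₁ : σ₂ x₁ = x₁) (hσ₂x₂ : σ₂ x₂ = q * x₂)
    (hq : q ≠ 0) (hx₁ : x₁ ≠ 0) (hx₂ : x₂ ≠ 0) (h₁₂ : x₁ ≠ x₂) (hq₁₂ : q * x₁ ≠ x₂)
    (hq₂₁ : q * x₂ ≠ x₁) (k : ℤ) (f : F) :
    q * diffOp σ₁ σ₂ x₁ x₂ (k + 1) (diffOp σ₁ σ₂ x₁ x₂ (k - 1) f) =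
      diffOp σ₁ σ₂ x₁ x₂ k (diffOp σ₁ σ₂ x₁ x₂ k f) - (x₁ * x₂) ^ k * σ₁ (σ₂ f) := by
  simp only [diffOp, map_add, map_mul, map_mCoeff, hσ₁x₁, hσ₁x₂, hσ₂x₁, hσ₂x₂, hσ f]
  linear_combination σ₁ (σ₁ f) * mCoeff_diagonal x₂ hq hx₁ k +
    σ₂ (σ₂ f) * mCoeff_diagonal x₁ hq hx₂ k +
    σ₂ (σ₁ f) * mCoeff_cross hx₁ hx₂ h₁₂ hq₁₂ hq₂₁ k

end DifferenceOperator

section Shifts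

open MvPolynomial

variable {N : ℕ}

lemma shiftHom_comp (v w : Fin N → ℤ) :
    (shiftHom N v).comp (shiftHom N w) = shiftHom N (v + w) := by
  refine MvPolynomial.algHom_ext fun j => ?_
  simp only [AlgHom.comp_apply, shiftHom, aeval_X, map_mul, aeval_C]
  rw [MvPolynomial.algebraMap_eq, ← mul_assoc, ← C_mul, ← zpow_add₀ sq_ne_zero, add_comm,
    Pi.add_apply]

lemma Γ_algebraMap (v : Fin N → ℤ) (p : Pol N) :
    Γ N v (algebraMap (Pol N) (K N) p) = algebraMap (Pol N) (K N) (shiftEquiv N v p) :=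
  IsFractionRing.ringEquivOfRingEquiv_algebraMap _ _

lemma Γ_Γ (v w : Fin N → ℤ) (f : K N) : Γ N v (Γ N w f) = Γ N (v + w) f := by
  suffices h : ((Γ N v : K N →+* K N).comp (Γ N w : K N →+* K N)) = (Γ N (v + w) : K N →+* K N)
    from DFunLike.congr_fun h f
  refine IsLocalization.ringHom_ext (nonZeroDivisors (Pol N)) (RingHom.ext fun p => ?_)
  simp only [RingHom.comp_apply, RingEquiv.coe_toRingHom, Γ_algebraMap]
  exact congrArg _ (AlgHom.congr_fun (shiftHom_comp v w) p)

lemma ΓA_ΓA (v w : Fin N → ℤ) (f : K N) : ΓA N v (ΓA N w f) = ΓA N (v + w) f := by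
  rw [ΓA, ΓA, ΓA, Γ_Γ, smul_add]

lemma ΓA_xA (v : Fin N → ℤ) (i : Fin N) : ΓA N v (xA N i) = qK N ^ v i * xA N i := by
  have hsQ : sQ ^ (2 • v) i = qq ^ v i := by
    rw [Pi.smul_apply, nsmul_eq_mul, Nat.cast_ofNat, zpow_mul, qq, zpow_ofNat]
  have hX : shiftEquiv N (2 • v) (X i) = C (sQ ^ (2 • v) i) * X i := by
    simp [shiftEquiv, shiftHom]
  rw [ΓA, xA, y, Γ_algebraMap, hX, map_mul, hsQ, qK]
  exact congrArg (· * _) (map_zpow₀ ((algebraMap (Pol N) (K N)).comp C) qq (v i))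

lemma algebraMap_ne_zero {p : Pol N} (hp : p ≠ 0) : algebraMap (Pol N) (K N) p ≠ 0 :=
  (map_ne_zero_iff _ (IsFractionRing.injective (Pol N) (K N))).mpr hp

lemma qK_ne_zero : qK N ≠ 0 :=
  algebraMap_ne_zero (C_ne_zero.mpr (pow_ne_zero 2 sq_ne_zero))

lemma xA_ne_zero (i : Fin N) : xA N i ≠ 0 :=
  algebraMap_ne_zero (X_ne_zero i)

lemma xA_injective : Function.Injective (xA N) :=
  fun _ _ h => X_injective (IsFractionRing.injective (Pol N) (K N) h)

lemma qK_mul_xA_ne_xA {i j : Fin N} (hij : i ≠ j) : qK N * xA N i ≠ xA N j := by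
  rw [xA, xA, y, y, qK, ← map_mul, Ne, (IsFractionRing.injective (Pol N) (K N)).eq_iff]
  intro h
  have := congrArg (coeff (Finsupp.single j 1)) h
  simp [coeff_C_mul, coeff_X, Finsupp.single_eq_single_iff, hij] at this

end Shifts

/-- the rank-one instance of the `A`-type quantum Q-system:
`q·M_{1,k+1} M_{1,k−1} = M_{1,k}² − M_{2,k} M_{0,k}` with `M_{0,k} = Id`. -/
theorem stmt5 (k : ℤ) :
    qK 2 • (M1 (k + 1) ∘ M1 (k - 1)) = M1 k ∘ M1 k - M2 k ∘ (id : K 2 → K 2) := by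
  funext f
  have hΓ₁₂ : ΓA 2 ![1, 1] f = ΓA 2 ![1, 0] (ΓA 2 ![0, 1] f) := by
    rw [ΓA_ΓA]; congr; decide
  have hcomm (g : K 2) : ΓA 2 ![1, 0] (ΓA 2 ![0, 1] g) = ΓA 2 ![0, 1] (ΓA 2 ![1, 0] g) := by
    rw [ΓA_ΓA, ΓA_ΓA, add_comm]
  show qK 2 * M1 (k + 1) (M1 (k - 1) f) = M1 k (M1 k f) - M2 k f
  rw [M2, hΓ₁₂]
  exact diffOp_qSystem (σ₁ := (ΓA 2 ![1, 0] : K 2 →+* K 2)) (σ₂ := ΓA 2 ![0, 1]) hcomm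
    (by simp [ΓA_xA]) (by simp [ΓA_xA]) (by simp [ΓA_xA]) (by simp [ΓA_xA])
    qK_ne_zero (xA_ne_zero 0) (xA_ne_zero 1) (xA_injective.ne (by decide))
    (qK_mul_xA_ne_xA (by decide)) (qK_mul_xA_ne_xA (by decide)) k f
end
end

section
/- Suppose noncommuting invertible elements Q_{a,k} (a ∈ {0,...,N+1}, k ∈ ℤ) satisfy the type A quantum Q-system: Q_{a,k} Q_{b,p} = q^{λ_{a,b}(p−k)} Q_{b,p} Q_{a,k} within a cluster, q^{λ_{a,a}} Q_{a,k+1} Q_{a,k−1} = Q_{a,k}^2 − q^{1/2} Q_{a+1,k} Q_{a−1,k}, Q_{0,k}=1, Q_{N+1,k}=0, with λ_{ab} = min(a,b) − ab/N. Adjoin a degree operator Δ^{1/N} with Δ Q_{a,k} = q^{ak} Q_{a,k} Δ. Then the renormalized variables Q̃_{a,k} = q^{−(1/2)(k+N/2)λ_{a,a}} Q_{a,k} Δ^{a/N} satisfy q^a Q̃_{a,k+1} Q̃_{a,k−1} = Q̃_{a,k}^2 − Q̃_{a+1,k} Q̃_{a−1,k} and Q̃_{a,k} Q̃_{b,k'}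 = q^{(k'−k)min(a,b)} Q̃_{b,k'} Q̃_{a,k} for |k−k'| ≤ |a−b|+1. -/
def lamE (N a b : ℕ) : ℤ := 2 * (N : ℤ) * min (a : ℤ) (b : ℤ) - 2 * (a : ℤ) * (b : ℤ)
def renE (N a : ℕ) (k : ℤ) : ℤ := -(2 * k + (N : ℤ)) * ((N : ℤ) * a - (a : ℤ) ^ 2) / 2
def Qt {A : Type*} [Ring A] (N : ℕ) (z δ : Aˣ) (Q : ℕ → ℤ → A) (a : ℕ) (k : ℤ) : A :=
  ((z ^ renE N a k : Aˣ) : A) * Q a k * ((δ ^ a : Aˣ) : A)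

lemma renE_dvd (N a : ℕ) (k : ℤ) : (2:ℤ) ∣ -(2*k+(N:ℤ)) * ((N:ℤ)*(a:ℤ) - (a:ℤ)^2) := by
  rcases Int.even_or_odd (N:ℤ) with ⟨m, hm⟩ | ⟨m, hm⟩
  · exact ⟨-(k+m) * ((N:ℤ)*(a:ℤ) - (a:ℤ)^2), by rw [hm]; ring⟩
  · rcases Int.even_or_odd (a:ℤ) with ⟨n, hn⟩ | ⟨n, hn⟩
    · exact ⟨-(2*k+(N:ℤ)) * ((N:ℤ)*n - 2*n^2), by rw [hn]; ring⟩
    · exact ⟨-(2*k+(N:ℤ)) * ((2*n+1) * (m - n)), by rw [hm, hn]; ring⟩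

lemma renE_spec (N a : ℕ) (k : ℤ) :
    2 * renE N a k = -(2*k+(N:ℤ)) * ((N:ℤ)*(a:ℤ) - (a:ℤ)^2) := by
  unfold renE
  exact Int.mul_ediv_cancel' (renE_dvd N a k)

/-- suppose the noncommuting variables `Q_{a,k}` satisfy the type `A`
quantum Q-system
`Q_{a,k} Q_{b,p} = q^{λ_{a,b}(p−k)} Q_{b,p} Q_{a,k}` (within a cluster),
`q^{λ_{a,a}} Q_{a,k+1} Q_{a,k−1} = Q_{a,k}² − q^{1/2} Q_{a+1,k} Q_{a−1,k}`,
`Q_{0,k} = 1`, `Q_{N+1,k} = 0`, with `λ_{ab} = min(a,b) − ab/N`, over a ring containing a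
central invertible `z = q^{1/(2N)}` and a degree operator `δ = Δ^{1/N}` with
`Δ Q_{a,k} = q^{ak} Q_{a,k} Δ` (`δ Q_{a,k} = q^{ak/N} Q_{a,k} δ`).  Then the renormalized
variables `Q̃_{a,k} = q^{−(1/2)(k+N/2)λ_{a,a}} Q_{a,k} Δ^{a/N}` satisfy
`q^a Q̃_{a,k+1} Q̃_{a,k−1} = Q̃_{a,k}² − Q̃_{a+1,k} Q̃_{a−1,k}` and
`Q̃_{a,k} Q̃_{b,k'} = q^{(k'−k)min(a,b)} Q̃_{b,k'} Q̃_{a,k}` for `|k−k'| ≤ |a−b|+1`. -/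
theorem stmt10 {A : Type*} [Ring A] (N : ℕ) (hN : 0 < N)
    (z δ : Aˣ) (hz : ∀ x : A, (z : A) * x = x * (z : A))
    (Q : ℕ → ℤ → A)
    (hQ0 : ∀ k : ℤ, Q 0 k = 1)
    (hQtop : ∀ k : ℤ, Q (N + 1) k = 0)
    (hcomm : ∀ a b : ℕ, 1 ≤ a → a ≤ N → 1 ≤ b → b ≤ N → ∀ k p : ℤ,
      |p - k| ≤ |(a : ℤ) - (b : ℤ)| + 1 →
      Q a k * Q b p = ((z ^ ((p - k) * lamE N a b) : Aˣ) : A) * (Q b p * Q a k))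
    (hex : ∀ a : ℕ, 1 ≤ a → a ≤ N → ∀ k : ℤ,
      ((z ^ lamE N a a : Aˣ) : A) * (Q a (k + 1) * Q a (k - 1)) =
        Q a k * Q a k - ((z ^ (N : ℤ) : Aˣ) : A) * (Q (a + 1) k * Q (a - 1) k))
    (hδ : ∀ (a : ℕ) (k : ℤ),
      (δ : A) * Q a k = ((z ^ (2 * (a : ℤ) * k) : Aˣ) : A) * (Q a k * (δ : A))) :
    (∀ a : ℕ, 1 ≤ a → a ≤ N → ∀ k : ℤ,
      ((z ^ (2 * (N : ℤ) * (a : ℤ)) : Aˣ) : A) * (Qt N z δ Q a (k + 1) * Qt N z δ Q a (k - 1)) =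
        Qt N z δ Q a k * Qt N z δ Q a k - Qt N z δ Q (a + 1) k * Qt N z δ Q (a - 1) k) ∧
    (∀ a b : ℕ, 1 ≤ a → a ≤ N → 1 ≤ b → b ≤ N → ∀ k k' : ℤ,
      |k - k'| ≤ |(a : ℤ) - (b : ℤ)| + 1 →
      Qt N z δ Q a k * Qt N z δ Q b k' =
        ((z ^ (2 * (N : ℤ) * (k' - k) * min (a : ℤ) (b : ℤ)) : Aˣ) : A) *
          (Qt N z δ Q b k' * Qt N z δ Q a k)) := by
  have c_mul : ∀ (i j : ℤ), ((z^i:Aˣ):A) * ((z^j:Aˣ):A) = ((z^(i+j):Aˣ):A) := by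
    intro i j; rw [← Units.val_mul, ← zpow_add]
  have c_mul' : ∀ (i j : ℤ) (x : A), ((z^i:Aˣ):A) * (((z^j:Aˣ):A) * x) = ((z^(i+j):Aˣ):A) * x := by
    intro i j x; rw [← mul_assoc, c_mul]
  have c_comm : ∀ (i : ℤ) (x : A), x * ((z^i:Aˣ):A) = ((z^i:Aˣ):A) * x :=
    fun i x => ((Commute.units_zpow_left (hz x) i).eq).symm
  have c_pull : ∀ (i : ℤ) (x y : A), x * (((z^i:Aˣ):A) * y) = ((z^i:Aˣ):A) * (x * y) := by
    intro i x y; rw [← mul_assoc, c_comm, mul_assoc]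
  have Qc : ∀ (a:ℕ)(k:ℤ)(i:ℤ)(y:A), Q a k * (((z^i:Aˣ):A) * y) = ((z^i:Aˣ):A) * (Q a k * y) :=
    fun a k i y => c_pull i _ y
  have dc : ∀ (n:ℕ)(i:ℤ)(y:A), (δ:A)^n * (((z^i:Aˣ):A) * y) = ((z^i:Aˣ):A) * ((δ:A)^n * y) :=
    fun n i y => c_pull i _ y
  have dpow : ∀ (n b : ℕ) (k : ℤ) (y : A),
      (δ:A)^n * (Q b k * y) = ((z^(2*(b:ℤ)*k*(n:ℤ)):Aˣ):A) * (Q b k * ((δ:A)^n * y)) := by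
    intro n
    induction n with
    | zero => intro b k y; simp
    | succ n ih =>
      intro b k y
      have hstep : (δ:A) * (Q b k * ((δ:A)^n * y))
          = ((z^(2*(b:ℤ)*k):Aˣ):A) * (Q b k * ((δ:A) * ((δ:A)^n * y))) := by
        rw [← mul_assoc, hδ, mul_assoc, mul_assoc, mul_assoc]
      calc (δ:A)^(n+1) * (Q b k * y) = (δ:A) * ((δ:A)^n * (Q b k * y)) := by
            rw [pow_succ', mul_assoc]
        _ = (δ:A) * (((z^(2*(b:ℤ)*k*(n:ℤ)):Aˣ):A) * (Q b k * ((δ:A)^n * y))) := by rw [ih]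
        _ = ((z^(2*(b:ℤ)*k*(n:ℤ)):Aˣ):A) * ((δ:A) * (Q b k * ((δ:A)^n * y))) := c_pull _ _ _
        _ = ((z^(2*(b:ℤ)*k*(n:ℤ)):Aˣ):A) * (((z^(2*(b:ℤ)*k):Aˣ):A) * (Q b k * ((δ:A) * ((δ:A)^n * y)))) := by
            rw [hstep]
        _ = ((z^(2*(b:ℤ)*k*((n:ℕ)+1:ℤ)):Aˣ):A) * (Q b k * ((δ:A)^(n+1) * y)) := by
            rw [c_mul', ← mul_assoc (δ:A) ((δ:A)^n) y, ← pow_succ']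
            congr 2
            ring
  have prod_Qt : ∀ (a b : ℕ) (k k' : ℤ),
      Qt N z δ Q a k * Qt N z δ Q b k' =
        ((z ^ (renE N a k + (renE N b k' + 2 * (b:ℤ) * k' * (a:ℤ))) : Aˣ):A) *
          (Q a k * (Q b k' * ((δ:A)^a * (δ:A)^b))) := by
    intro a b k k'
    simp only [Qt, Units.val_pow_eq_pow_val, mul_assoc]
    simp only [dc, dpow, Qc, c_mul']
    congr 3
    ring
  constructor
  · -- exchange relation
    intro a ha haN k
    have hexy : ∀ y : A, Q a (k+1) * (Q a (k-1) * y)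
        = ((z^(-lamE N a a):Aˣ):A) * (Q a k * (Q a k * y))
          - ((z^(-lamE N a a + (N:ℤ)):Aˣ):A) * (Q (a+1) k * (Q (a-1) k * y)) := by
      intro y
      have h2 : Q a (k+1) * Q a (k-1)
          = ((z^(-lamE N a a):Aˣ):A) * (Q a k * Q a k)
            - ((z^(-lamE N a a + (N:ℤ)):Aˣ):A) * (Q (a+1) k * Q (a-1) k) := by
        calc Q a (k+1) * Q a (k-1)
            = ((z^(-lamE N a a):Aˣ):A) * (((z^(lamE N a a):Aˣ):A) * (Q a (k+1) * Q a (k-1))) := by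
              rw [c_mul']; simp
          _ = ((z^(-lamE N a a):Aˣ):A) *
                (Q a k * Q a k - ((z^(N:ℤ):Aˣ):A) * (Q (a+1) k * Q (a-1) k)) := by
              rw [hex a ha haN k]
          _ = _ := by rw [mul_sub, c_mul']
      calc Q a (k+1) * (Q a (k-1) * y) = (Q a (k+1) * Q a (k-1)) * y := by rw [mul_assoc]
        _ = _ := by
            rw [h2, sub_mul]
            simp only [mul_assoc]
    rw [prod_Qt a a (k+1) (k-1), prod_Qt a a k k, prod_Qt (a+1) (a-1) k k, c_mul',
      hexy ((δ:A)^a * (δ:A)^a), mul_sub, c_mul', c_mul']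
    have hδδ : (δ:A)^(a+1) * (δ:A)^(a-1) = (δ:A)^a * (δ:A)^a := by
      rw [← pow_add, ← pow_add]
      congr 1
      omega
    rw [hδδ]
    have s1 := renE_spec N a (k+1)
    have s2 := renE_spec N a (k-1)
    have s0 := renE_spec N a k
    have s3 := renE_spec N (a+1) k
    have s4 := renE_spec N (a-1) k
    have hcast : ((a-1:ℕ):ℤ) = (a:ℤ)-1 := by omega
    have hcast2 : ((a+1:ℕ):ℤ) = (a:ℤ)+1 := by omega
    rw [hcast] at s4
    rw [hcast2] at s3
    have min_eq : lamE N a a = 2*(N:ℤ)*(a:ℤ) - 2*(a:ℤ)*(a:ℤ) := by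
      unfold lamE; rw [min_self]
    have e1 : 2 * (N:ℤ) * (a:ℤ) + (renE N a (k + 1) + (renE N a (k - 1) + 2 * (a:ℤ) * (k - 1) * (a:ℤ))) + -lamE N a a
        = renE N a k + (renE N a k + 2 * (a:ℤ) * k * (a:ℤ)) := by
      have hd : 2 * (2 * (N:ℤ) * (a:ℤ) + (renE N a (k + 1) + (renE N a (k - 1) + 2 * (a:ℤ) * (k - 1) * (a:ℤ))) + -lamE N a a)
          = 2 * (renE N a k + (renE N a k + 2 * (a:ℤ) * k * (a:ℤ))) := by
        rw [min_eq]
        linear_combination s1 + s2 - 2*s0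
      linarith
    have e2 : 2 * (N:ℤ) * (a:ℤ) + (renE N a (k + 1) + (renE N a (k - 1) + 2 * (a:ℤ) * (k - 1) * (a:ℤ))) + (-lamE N a a + (N:ℤ))
        = renE N (a+1) k + (renE N (a-1) k + 2 * ((a-1:ℕ):ℤ) * k * ((a+1:ℕ):ℤ)) := by
      rw [hcast, hcast2]
      have hd : 2 * (2 * (N:ℤ) * (a:ℤ) + (renE N a (k + 1) + (renE N a (k - 1) + 2 * (a:ℤ) * (k - 1) * (a:ℤ))) + (-lamE N a a + (N:ℤ)))
          = 2 * (renE N (a+1) k + (renE N (a-1) k + 2 * ((a:ℤ)-1) * k * ((a:ℤ)+1))) := by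
        rw [min_eq]
        linear_combination s1 + s2 - s3 - s4
      linarith
    rw [e1, e2]
  · -- commutation
    intro a b ha haN hb hbN k k' habs
    rw [abs_sub_comm] at habs
    have hc := hcomm a b ha haN hb hbN k k' habs
    have hc' : ∀ y : A, Q a k * (Q b k' * y)
        = ((z ^ ((k' - k) * lamE N a b) : Aˣ):A) * (Q b k' * (Q a k * y)) := by
      intro y
      rw [← mul_assoc, hc, mul_assoc, mul_assoc]
    rw [prod_Qt a b k k', prod_Qt b a k' k, c_mul', hc', c_mul',
      ((Commute.refl (δ:A)).pow_pow b a).eq,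
      show renE N a k + (renE N b k' + 2 * (b:ℤ) * k' * (a:ℤ)) + (k' - k) * lamE N a b
          = 2 * (N:ℤ) * (k' - k) * min (a:ℤ) (b:ℤ) + (renE N b k' + (renE N a k + 2 * (a:ℤ) * k * (b:ℤ)))
        from by unfold lamE; ring]
end

section
/- For the C_N operators M_{N,k}^{(C_N)} = Σ_{ε∈{±1}^N} Π_{i=1}^N [x_i^{2ε_i}/(x_i^{2ε_i}−1)] Π_{1≤i<j≤N} [x_i^{ε_i}x_j^{ε_j}/(x_i^{ε_i}x_j^{ε_j}−1)] Π_i x_i^{kε_i} Π_i Γ_i^{ε_i}: with Gaussian γ = exp(Σ_i (Log x_i)^2/(4 Log q)) one has M_{N,k}^{(C_N)} = q^{−kN/2} γ^{−2k} ∘ M_{N,0}^{(C_N)} ∘ γ^{2k} for all k ∈ ℤ. -/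
noncomputable section

/-- The sign vector `ε ∈ {±1}^N` attached to a subset `S` (`ε_i = −1` iff `i ∈ S`). -/
def eps {N : ℕ} (S : Finset (Fin N)) (i : Fin N) : ℤ := if i ∈ S then -1 else 1

/-- The type `C_N` difference operator
`M_{N,k} = Σ_{ε∈{±1}^N} Π_i x_i^{2ε_i}/(x_i^{2ε_i}−1) Π_{i<j} x_i^{ε_i}x_j^{ε_j}/(x_i^{ε_i}x_j^{ε_j}−1)
Π_i x_i^{kε_i} Π_i Γ_i^{ε_i}`,
acting on a field `L` of functions of `x_1,…,x_N`, where `Γ v = ∏_i Γ_i^{v_i}` denotes the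
`q`-shift operators (`Γ_i : x_i ↦ q x_i`). -/
def MCgen {L : Type*} [Field L] (N : ℕ) (x : Fin N → L) (Γ : (Fin N → ℤ) → L ≃+* L)
    (k : ℤ) : L → L := fun f =>
  ∑ S ∈ (Finset.univ : Finset (Fin N)).powerset,
    (∏ i, x i ^ (2 * eps S i) / (x i ^ (2 * eps S i) - 1)) *
      ((∏ i, ∏ j ∈ Finset.univ.filter (fun j => i < j),
          (x i ^ eps S i * x j ^ eps S j) / (x i ^ eps S i * x j ^ eps S j - 1)) *
        ((∏ i, x i ^ (k * eps S i)) * Γ (eps S) f))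

/-- with the Gaussian `γ = exp(Σ_i (Log x_i)²/(4 Log q))`, i.e. any invertible
function with `Γ v (γ²) = (∏_i q^{v_i²/2} x_i^{v_i}) γ²` (writing `s = q^{1/2}`), one has
`M_{N,k}^{(C_N)} = q^{−kN/2} γ^{−2k} ∘ M_{N,0}^{(C_N)} ∘ γ^{2k}` for all `k ∈ ℤ`. -/
theorem stmt17 {L : Type*} [Field L] (N : ℕ) (q s : L) (hs : s ^ 2 = q) (hs0 : s ≠ 0)
    (x : Fin N → L) (Γ : (Fin N → ℤ) → L ≃+* L)
    (hΓx : ∀ (v : Fin N → ℤ) (i : Fin N), Γ v (x i) = q ^ v i * x i)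
    (γ : L) (hγ0 : γ ≠ 0)
    (hγ : ∀ v : Fin N → ℤ, Γ v (γ ^ 2) = (∏ i, s ^ (v i ^ 2) * x i ^ v i) * γ ^ 2) :
    ∀ k : ℤ, MCgen N x Γ k = fun f =>
      s ^ (-(k * (N : ℤ))) * (γ ^ (-(2 * k)) * MCgen N x Γ 0 (γ ^ (2 * k) * f)) := by
  intro k
  funext f
  simp only [MCgen, Finset.mul_sum]
  refine Finset.sum_congr rfl fun S _ => ?_
  have h2k : (γ : L) ^ (2 * k) = (γ ^ 2) ^ k := by
    rw [← zpow_natCast γ 2, ← zpow_mul]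
    norm_num
  have hΓγ : Γ (eps S) (γ ^ (2 * k) * f)
      = ((∏ i, s * x i ^ eps S i) ^ k * γ ^ (2 * k)) * Γ (eps S) f := by
    have hprod : (∏ i, s ^ (eps S i) ^ 2 * x i ^ eps S i) = ∏ i, s * x i ^ eps S i := by
      refine Finset.prod_congr rfl fun i _ => ?_
      have : (eps S i) ^ 2 = 1 := by unfold eps; split <;> norm_num
      rw [this, zpow_one]
    rw [map_mul, h2k, map_zpow₀, hγ, hprod, mul_zpow, ← h2k]
  rw [hΓγ]
  have hP : (∏ i, s * x i ^ eps S i) ^ k = (∏ _i : Fin N, (s : L) ^ k) * ∏ i, x i ^ (k * eps S i) := by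
    calc (∏ i, s * x i ^ eps S i) ^ k
        = ∏ i, ((s : L) ^ k * x i ^ (k * eps S i)) := by
          rw [← Finset.prod_zpow (fun i => s * x i ^ eps S i) Finset.univ k]
          refine Finset.prod_congr rfl fun i _ => ?_
          rw [mul_zpow, ← zpow_mul, mul_comm (eps S i) k]
      _ = (∏ _i : Fin N, (s : L) ^ k) * ∏ i, x i ^ (k * eps S i) := Finset.prod_mul_distrib
  have hsN : (∏ _i : Fin N, (s : L) ^ k) = s ^ (k * (N : ℤ)) := by
    rw [Finset.prod_const, Finset.card_univ, Fintype.card_fin, ← zpow_natCast (s ^ k) N,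
      ← zpow_mul]
  have hγc : γ ^ (-(2 * k)) * γ ^ (2 * k) = 1 := by
    rw [zpow_neg, inv_mul_cancel₀ (zpow_ne_zero _ hγ0)]
  have hsc : s ^ (-(k * (N : ℤ))) * s ^ (k * (N : ℤ)) = 1 := by
    rw [zpow_neg, inv_mul_cancel₀ (zpow_ne_zero _ hs0)]
  rw [hP, hsN]
  simp only [zero_mul, zpow_zero, Finset.prod_const_one, one_mul]
  set A := ∏ i, x i ^ (2 * eps S i) / (x i ^ (2 * eps S i) - 1)
  set B := ∏ i, ∏ j ∈ Finset.univ.filter (fun j => i < j),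
      (x i ^ eps S i * x j ^ eps S j) / (x i ^ eps S i * x j ^ eps S j - 1)
  set C := ∏ i, x i ^ (k * eps S i)
  set G := Γ (eps S) f
  calc A * (B * (C * G))
      = (s ^ (-(k * (N : ℤ))) * s ^ (k * (N : ℤ))) * ((γ ^ (-(2 * k)) * γ ^ (2 * k)) *
        (A * (B * (C * G)))) := by rw [hγc, hsc]; ring
    _ = s ^ (-(k * (N : ℤ))) * (γ ^ (-(2 * k)) * (A * (B * (s ^ (k * (N : ℤ)) * C * γ ^ (2 * k) * G)))) := by ring
end
end
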